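/- A Banach k-algebra A over a complete nonarchimedean rank-1 valued field k with nontrivial valuation is a Banach function algebra over k if and only if the subring A° of power-bounded elements is a bounded subset of A. -/

import Mathlib

/-!
Power-bounded elements have spectral radius `≤ 1`, so a bound `‖a‖ ≤ C ρ(a)` bounds `A°` by `C`.
Conversely, `ρ(a) < 1` makes `a` power-bounded, hence of norm `≤ R`. Since `ρ(d • a) = ‖d‖ ρ(a)`
and, for a fixed `c` with `‖c‖ > 1`, the norms `‖d‖` meet every interval `[ε / ‖c‖, ε)`,
rescaling `a` to spectral radius just below `1` gives `‖a‖ ≤ R ‖c‖ ρ(a)`.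
-/

noncomputable def specRad {A : Type*} [NormedRing A] (a : A) : ℝ :=
  ⨅ n : ℕ+, ‖a ^ (n : ℕ)‖ ^ (((n : ℕ) : ℝ))⁻¹

def PowBdd {A : Type*} [NormedRing A] (a : A) : Prop := ∃ C : ℝ, ∀ n : ℕ, ‖a ^ n‖ ≤ C

section NormedRing

variable {A : Type*} [NormedRing A]

lemma specRad_nonneg (a : A) : 0 ≤ specRad a :=
  Real.iInf_nonneg fun _ => Real.rpow_nonneg (norm_nonneg _) _

lemma specRad_le (a : A) (n : ℕ+) : specRad a ≤ ‖a ^ (n : ℕ)‖ ^ (((n : ℕ) : ℝ))⁻¹ :=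
  ciInf_le ⟨0, by rintro x ⟨m, rfl⟩; exact Real.rpow_nonneg (norm_nonneg _) _⟩ n

lemma specRad_le_one_of_powBdd {a : A} (ha : PowBdd a) : specRad a ≤ 1 := by
  obtain ⟨C, hC⟩ := ha
  refine le_of_forall_gt_imp_ge_of_dense fun t ht => ?_
  obtain ⟨n, hn⟩ := pow_unbounded_of_one_lt C ht
  let N : ℕ+ := ⟨n + 1, n.succ_pos⟩
  have hpow : ‖a ^ (N : ℕ)‖ ≤ t ^ (N : ℕ) :=
    calc ‖a ^ (N : ℕ)‖ ≤ C := hC _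
      _ ≤ t ^ n := hn.le
      _ ≤ t ^ (N : ℕ) := pow_le_pow_right₀ ht.le n.le_succ
  calc specRad a ≤ ‖a ^ (N : ℕ)‖ ^ (((N : ℕ) : ℝ))⁻¹ := specRad_le a N
    _ ≤ (t ^ (N : ℕ)) ^ (((N : ℕ) : ℝ))⁻¹ :=
        Real.rpow_le_rpow (norm_nonneg _) hpow (by positivity)
    _ = t := Real.pow_rpow_inv_natCast (zero_le_one.trans ht.le) N.ne_zero

lemma powBdd_of_norm_pow_le_one [NormOneClass A] {b : A} {m : ℕ} (hm : 0 < m)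
    (h : ‖b ^ m‖ ≤ 1) : PowBdd b := by
  refine ⟨(max 1 ‖b‖) ^ m, fun n => ?_⟩
  calc ‖b ^ n‖ = ‖(b ^ m) ^ (n / m) * b ^ (n % m)‖ := by
        rw [← pow_mul, ← pow_add, Nat.div_add_mod]
    _ ≤ ‖b ^ m‖ ^ (n / m) * ‖b‖ ^ (n % m) :=
        (norm_mul_le _ _).trans <| mul_le_mul (norm_pow_le _ _) (norm_pow_le _ _)
          (norm_nonneg _) (pow_nonneg (norm_nonneg _) _)
    _ ≤ 1 * (max 1 ‖b‖) ^ (n % m) :=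
        mul_le_mul (pow_le_one₀ (norm_nonneg _) h)
          (pow_le_pow_left₀ (norm_nonneg _) (le_max_right _ _) _)
          (pow_nonneg (norm_nonneg _) _) zero_le_one
    _ ≤ (max 1 ‖b‖) ^ m := by
        rw [one_mul]; exact pow_le_pow_right₀ (le_max_left _ _) (Nat.mod_lt n hm).le

lemma powBdd_of_specRad_lt_one [NormOneClass A] {a : A} (ha : specRad a < 1) : PowBdd a := by
  obtain ⟨m, hm⟩ : ∃ m : ℕ+, ‖a ^ (m : ℕ)‖ ^ (((m : ℕ) : ℝ))⁻¹ < 1 :=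
    exists_lt_of_ciInf_lt ha
  refine powBdd_of_norm_pow_le_one m.pos ?_
  calc ‖a ^ (m : ℕ)‖ = (‖a ^ (m : ℕ)‖ ^ (((m : ℕ) : ℝ))⁻¹) ^ (m : ℕ) :=
        (Real.rpow_inv_natCast_pow (norm_nonneg _) m.ne_zero).symm
    _ ≤ 1 := pow_le_one₀ (Real.rpow_nonneg (norm_nonneg _) _) hm.le

lemma specRad_smul {k : Type*} [NormedField k] [NormedAlgebra k A] (c : k) (a : A) :
    specRad (c • a) = ‖c‖ * specRad a := by
  rw [specRad, specRad, Real.mul_iInf_of_nonneg (norm_nonneg c)]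
  congr 1
  ext n
  have hn : ((n : ℕ) : ℝ) ≠ 0 := by exact_mod_cast n.ne_zero
  rw [smul_pow, norm_smul, norm_pow, Real.mul_rpow (by positivity) (norm_nonneg _),
    ← Real.rpow_natCast, ← Real.rpow_mul (norm_nonneg c), mul_inv_cancel₀ hn, Real.rpow_one]

end NormedRing

lemma le_mul_of_forall_norm_mul_lt_one {k : Type*} [NontriviallyNormedField k] {c : k}
    (hc : 1 < ‖c‖) {r s R : ℝ} (hr : 0 ≤ r) (hs : 0 ≤ s)
    (h : ∀ d : k, ‖d‖ * r < 1 → ‖d‖ * s ≤ R) : s ≤ R * ‖c‖ * r := by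
  rcases hr.eq_or_lt with rfl | hr
  · rw [mul_zero]
    by_contra! hs'
    obtain ⟨d, hd⟩ := NormedField.exists_lt_norm k (R / s)
    have := h d (by simp)
    rw [div_lt_iff₀ hs'] at hd
    linarith
  · obtain ⟨d, -, hd_lt, hd_ge, -⟩ := rescale_to_shell hc (inv_pos.mpr hr) (one_ne_zero (α := k))
    rw [smul_eq_mul, mul_one] at hd_lt hd_ge
    have hdR : ‖d‖ * s ≤ R := h d (by rwa [← lt_mul_inv_iff₀ hr, one_mul])
    have hc0 : 0 < ‖c‖ := zero_lt_one.trans hc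
    calc s = r⁻¹ / ‖c‖ * s * (‖c‖ * r) := by field_simp
      _ ≤ ‖d‖ * s * (‖c‖ * r) := by gcongr
      _ ≤ R * (‖c‖ * r) := by gcongr
      _ = R * ‖c‖ * r := by ring

theorem stmt9_general {k A : Type*} [NontriviallyNormedField k] [NormedCommRing A] [NormOneClass A]
    [NormedAlgebra k A] :
    (∃ C > 0, ∀ a : A, ‖a‖ ≤ C * specRad a) ↔
      (∃ R > 0, ∀ a : A, PowBdd a → ‖a‖ ≤ R) := by
  constructor
  · rintro ⟨C, hC, h⟩
    refine ⟨C, hC, fun a ha => (h a).trans ?_⟩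
    simpa using mul_le_mul_of_nonneg_left (specRad_le_one_of_powBdd ha) hC.le
  · rintro ⟨R, hR, h⟩
    obtain ⟨c, hc⟩ := NormedField.exists_one_lt_norm k
    refine ⟨R * ‖c‖, by positivity, fun a => ?_⟩
    refine le_mul_of_forall_norm_mul_lt_one hc (specRad_nonneg a) (norm_nonneg a) fun d hd => ?_
    rw [← specRad_smul] at hd
    rw [← norm_smul]
    exact h _ (powBdd_of_specRad_lt_one hd)

theorem stmt9 {k A : Type*} [NontriviallyNormedField k] [CompleteSpace k]
    [IsUltrametricDist k] [NormedCommRing A] [NormOneClass A] [IsUltrametricDist A]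
    [NormedAlgebra k A] [CompleteSpace A] :
    (∃ C > 0, ∀ a : A, ‖a‖ ≤ C * specRad a) ↔
      (∃ R > 0, ∀ a : A, PowBdd a → ‖a‖ ≤ R) :=
  stmt9_general (k := k)
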